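/- For any real constants Φ < -2π, μ, and A, the vector field u = (Φ/(2πr)) e_r + (μ/r + A r^{1+Φ/(2π)}) e_θ on ℝ²∖{0}, together with an appropriate pressure, is an exact solution of the stationary incompressible Navier-Stokes equations Δu - ∇p = u·∇u, ∇·u = 0. -/

import Mathlib

open Real

noncomputable section

/-- First partial derivative of a scalar function on ℝ². -/
def pd1 (f : ℝ × ℝ → ℝ) (x : ℝ × ℝ) : ℝ := fderiv ℝ f x (1, 0)

/-- Second partial derivative of a scalar function on ℝ². -/
def pd2 (f : ℝ × ℝ → ℝ) (x : ℝ × ℝ) : ℝ := fderiv ℝ f x (0, 1)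

/-- Laplacian of a scalar function on ℝ². -/
def lap (f : ℝ × ℝ → ℝ) (x : ℝ × ℝ) : ℝ := pd1 (pd1 f) x + pd2 (pd2 f) x

/-- Radial coordinate. -/
def rr (x : ℝ × ℝ) : ℝ := Real.sqrt (x.1 ^ 2 + x.2 ^ 2)

/-- Angular coordinate (argument of x₁ + i x₂). -/
def ang (x : ℝ × ℝ) : ℝ := Complex.arg (x.1 + x.2 * Complex.I)

/-- Radial unit vector e_r = x/|x|. -/
def er (x : ℝ × ℝ) : ℝ × ℝ := (x.1 / rr x, x.2 / rr x)

/-- Tangential unit vector e_θ = (-x₂, x₁)/|x|. -/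
def et (x : ℝ × ℝ) : ℝ × ℝ := (-x.2 / rr x, x.1 / rr x)

/-- The stationary Navier-Stokes equations Δu - ∇p = (u·∇)u, ∇·u = 0 hold at x. -/
def NSat (u : ℝ × ℝ → ℝ × ℝ) (p : ℝ × ℝ → ℝ) (x : ℝ × ℝ) : Prop :=
  lap (fun y => (u y).1) x - pd1 p x
      = (u x).1 * pd1 (fun y => (u y).1) x + (u x).2 * pd2 (fun y => (u y).1) x ∧
  lap (fun y => (u y).2) x - pd2 p x
      = (u x).1 * pd1 (fun y => (u y).2) x + (u x).2 * pd2 (fun y => (u y).2) x ∧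
  pd1 (fun y => (u y).1) x + pd2 (fun y => (u y).2) x = 0

/-- Rotation by angle ψ. -/
def rot (ψ : ℝ) (v : ℝ × ℝ) : ℝ × ℝ :=
  (Real.cos ψ * v.1 - Real.sin ψ * v.2, Real.sin ψ * v.1 + Real.cos ψ * v.2)

/-- Euclidean dot product on ℝ². -/
def dot (v w : ℝ × ℝ) : ℝ := v.1 * w.1 + v.2 * w.2

def M' (a b : ℕ) (e : ℝ) (y : ℝ × ℝ) : ℝ := y.1 ^ a * y.2 ^ b * (y.1 ^ 2 + y.2 ^ 2) ^ e

lemma sq_pos {y : ℝ × ℝ} (hy : y ≠ 0) : 0 < y.1 ^ 2 + y.2 ^ 2 := by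
  rcases Prod.mk.injEq .. ▸ (Prod.ext_iff.not.mp hy) with h
  have : y.1 ≠ 0 ∨ y.2 ≠ 0 := by
    by_contra hc; push_neg at hc
    exact hy (Prod.ext hc.1 hc.2)
  rcases this with h | h <;> positivity

lemma hasFDerivAt_M' (a b : ℕ) (e : ℝ) (y : ℝ × ℝ) (hy : y ≠ 0) :
    HasFDerivAt (M' a b e)
      (((a : ℝ) * M' (a - 1) b e y + 2 * e * M' (a + 1) b (e - 1) y) •
          ContinuousLinearMap.fst ℝ ℝ ℝ +
        ((b : ℝ) * M' a (b - 1) e y + 2 * e * M' a (b + 1) (e - 1) y) •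
          ContinuousLinearMap.snd ℝ ℝ ℝ) y := by
  have hs : y.1 ^ 2 + y.2 ^ 2 ≠ 0 := (sq_pos hy).ne'
  have h1 : HasFDerivAt (fun z : ℝ × ℝ => z.1 ^ a)
      (((a : ℝ) * y.1 ^ (a - 1)) • ContinuousLinearMap.fst ℝ ℝ ℝ) y :=
    (hasDerivAt_pow a y.1).comp_hasFDerivAt y hasFDerivAt_fst
  have h2 : HasFDerivAt (fun z : ℝ × ℝ => z.2 ^ b)
      (((b : ℝ) * y.2 ^ (b - 1)) • ContinuousLinearMap.snd ℝ ℝ ℝ) y :=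
    (hasDerivAt_pow b y.2).comp_hasFDerivAt y hasFDerivAt_snd
  have h3 : HasFDerivAt (fun z : ℝ × ℝ => z.1 ^ 2 + z.2 ^ 2)
      (((2 : ℝ) * y.1 ^ 1) • ContinuousLinearMap.fst ℝ ℝ ℝ +
        ((2 : ℝ) * y.2 ^ 1) • ContinuousLinearMap.snd ℝ ℝ ℝ) y := by
    have hA : HasFDerivAt (fun z : ℝ × ℝ => z.1 ^ 2)
        (((2 : ℝ) * y.1 ^ 1) • ContinuousLinearMap.fst ℝ ℝ ℝ) y := by
      have := (hasDerivAt_pow 2 y.1).comp_hasFDerivAt y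
        (hasFDerivAt_fst (p := y) (𝕜 := ℝ))
      simpa [Function.comp_def] using this
    have hB : HasFDerivAt (fun z : ℝ × ℝ => z.2 ^ 2)
        (((2 : ℝ) * y.2 ^ 1) • ContinuousLinearMap.snd ℝ ℝ ℝ) y := by
      have := (hasDerivAt_pow 2 y.2).comp_hasFDerivAt y
        (hasFDerivAt_snd (p := y) (𝕜 := ℝ))
      simpa [Function.comp_def] using this
    exact hA.add hB
  have h4 := (Real.hasDerivAt_rpow_const (p := e) (Or.inl hs)).comp_hasFDerivAt y h3
  have h5 := (h1.mul h2).mul h4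
  refine h5.congr_fderiv ?_
  refine ContinuousLinearMap.ext fun v => ?_
  simp only [ContinuousLinearMap.add_apply, ContinuousLinearMap.smul_apply,
    ContinuousLinearMap.coe_fst', ContinuousLinearMap.coe_snd', smul_eq_mul, M', Function.comp_apply, Pi.mul_apply]
  rw [Real.rpow_sub (sq_pos hy), Real.rpow_one]
  have h6 : (y.1 ^ 2 + y.2 ^ 2) ≠ 0 := hs
  field_simp
  ring

/-- A term: coefficient, powers of y₁, y₂, and real exponent of y₁²+y₂². -/
structure Tm where
  c : ℝ
  a : ℕ
  b : ℕ
  e : ℝ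

def tmv (t : Tm) (y : ℝ × ℝ) : ℝ := t.c * M' t.a t.b t.e y

def Lv (l : List Tm) (y : ℝ × ℝ) : ℝ := (l.map (tmv · y)).sum

def d1l (l : List Tm) : List Tm :=
  l.flatMap fun t => [⟨t.c * t.a, t.a - 1, t.b, t.e⟩, ⟨2 * t.c * t.e, t.a + 1, t.b, t.e - 1⟩]

def d2l (l : List Tm) : List Tm :=
  l.flatMap fun t => [⟨t.c * t.b, t.a, t.b - 1, t.e⟩, ⟨2 * t.c * t.e, t.a, t.b + 1, t.e - 1⟩]

lemma hasFDerivAt_Lv (l : List Tm) (y : ℝ × ℝ) (hy : y ≠ 0) :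
    HasFDerivAt (Lv l)
      ((Lv (d1l l) y) • ContinuousLinearMap.fst ℝ ℝ ℝ +
        (Lv (d2l l) y) • ContinuousLinearMap.snd ℝ ℝ ℝ) y := by
  induction l with
  | nil =>
    have : HasFDerivAt (Lv []) (0 : ℝ × ℝ →L[ℝ] ℝ) y := by
      exact (hasFDerivAt_const (0 : ℝ) y).congr_of_eventuallyEq
        (Filter.Eventually.of_forall fun z => by simp [Lv])
    refine this.congr_fderiv ?_
    simp [Lv, d1l, d2l]
  | cons t l ih =>
    have ht : HasFDerivAt (fun z => tmv t z)
        ((t.c * ((t.a : ℝ) * M' (t.a - 1) t.b t.e y + 2 * t.e * M' (t.a + 1) t.b (t.e - 1) y)) •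
            ContinuousLinearMap.fst ℝ ℝ ℝ +
          (t.c * ((t.b : ℝ) * M' t.a (t.b - 1) t.e y + 2 * t.e * M' t.a (t.b + 1) (t.e - 1) y)) •
            ContinuousLinearMap.snd ℝ ℝ ℝ) y := by
      have := (hasFDerivAt_M' t.a t.b t.e y hy).const_mul t.c
      refine this.congr_fderiv ?_
      refine ContinuousLinearMap.ext fun v => ?_
      simp [tmv]
      ring
    have hsum : HasFDerivAt (Lv (t :: l)) _ y := ht.add ih
    refine hsum.congr_fderiv ?_
    refine ContinuousLinearMap.ext fun v => ?_
    simp only [Lv, d1l, d2l, List.flatMap_cons, List.map_append, List.sum_append,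
      List.map_cons, List.map_nil, List.sum_cons, List.sum_nil, tmv,
      ContinuousLinearMap.add_apply, ContinuousLinearMap.smul_apply,
      ContinuousLinearMap.coe_fst', ContinuousLinearMap.coe_snd', smul_eq_mul]
    ring

lemma pd1_Lv (l : List Tm) (y : ℝ × ℝ) (hy : y ≠ 0) : pd1 (Lv l) y = Lv (d1l l) y := by
  rw [pd1, (hasFDerivAt_Lv l y hy).fderiv]
  simp

lemma pd2_Lv (l : List Tm) (y : ℝ × ℝ) (hy : y ≠ 0) : pd2 (Lv l) y = Lv (d2l l) y := by
  rw [pd2, (hasFDerivAt_Lv l y hy).fderiv]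
  simp

lemma pd1_congr {f g : ℝ × ℝ → ℝ} {x : ℝ × ℝ} (h : f =ᶠ[nhds x] g) : pd1 f x = pd1 g x := by
  rw [pd1, pd1, h.fderiv_eq]

lemma pd2_congr {f g : ℝ × ℝ → ℝ} {x : ℝ × ℝ} (h : f =ᶠ[nhds x] g) : pd2 f x = pd2 g x := by
  rw [pd2, pd2, h.fderiv_eq]

lemma eventually_ne {x : ℝ × ℝ} (hx : x ≠ 0) : ∀ᶠ y in nhds x, y ≠ (0 : ℝ × ℝ) :=
  (isOpen_compl_singleton).eventually_mem hx

lemma pd1_Lv_ev (l : List Tm) {x : ℝ × ℝ} (hx : x ≠ 0) :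
    pd1 (Lv l) =ᶠ[nhds x] Lv (d1l l) :=
  (eventually_ne hx).mono fun y hy => pd1_Lv l y hy

lemma pd2_Lv_ev (l : List Tm) {x : ℝ × ℝ} (hx : x ≠ 0) :
    pd2 (Lv l) =ᶠ[nhds x] Lv (d2l l) :=
  (eventually_ne hx).mono fun y hy => pd2_Lv l y hy

lemma lap_Lv (l : List Tm) (x : ℝ × ℝ) (hx : x ≠ 0) :
    lap (Lv l) x = Lv (d1l (d1l l)) x + Lv (d2l (d2l l)) x := by
  rw [lap, pd1_congr (pd1_Lv_ev l hx), pd2_congr (pd2_Lv_ev l hx),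
    pd1_Lv _ x hx, pd2_Lv _ x hx]

lemma lap_congr {f g : ℝ × ℝ → ℝ} {x : ℝ × ℝ} (hx : x ≠ 0)
    (h : ∀ y : ℝ × ℝ, y ≠ 0 → f y = g y) : lap f x = lap g x := by
  have hev : ∀ {z : ℝ × ℝ}, z ≠ 0 → f =ᶠ[nhds z] g := fun hz =>
    (eventually_ne hz).mono fun y hy => h y hy
  have h1 : pd1 f =ᶠ[nhds x] pd1 g :=
    (eventually_ne hx).mono fun y hy => pd1_congr (hev hy)
  have h2 : pd2 f =ᶠ[nhds x] pd2 g :=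
    (eventually_ne hx).mono fun y hy => pd2_congr (hev hy)
  rw [lap, lap, pd1_congr h1, pd2_congr h2]


def tL1 (β γ μ A : ℝ) : List Tm :=
  [⟨β, 1, 0, -1⟩, ⟨-μ, 0, 1, -1⟩, ⟨-A, 0, 1, γ⟩]

def tL2 (β γ μ A : ℝ) : List Tm :=
  [⟨β, 0, 1, -1⟩, ⟨μ, 1, 0, -1⟩, ⟨A, 1, 0, γ⟩]

def tLP (β γ μ A : ℝ) : List Tm :=
  [⟨-(β ^ 2 + μ ^ 2) / 2, 0, 0, -1⟩, ⟨2 * μ * A / β, 0, 0, γ⟩,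
    ⟨A ^ 2 / (2 * β + 2), 0, 0, 2 * γ + 1⟩]

def qv (β μ A : ℝ) (t : ℝ) : ℝ :=
  -(β ^ 2 + μ ^ 2) / 2 * t ^ (2 * (-1) : ℝ) + 2 * μ * A / β * t ^ (2 * (β / 2) : ℝ) +
    A ^ 2 / (2 * β + 2) * t ^ (2 * (2 * (β / 2) + 1) : ℝ)

lemma rr_pos {y : ℝ × ℝ} (hy : y ≠ 0) : 0 < rr y := Real.sqrt_pos.mpr (sq_pos hy)

lemma hRc {y : ℝ × ℝ} (hy : y ≠ 0) (c : ℝ) : (y.1 ^ 2 + y.2 ^ 2) ^ c = rr y ^ (2 * c) := by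
  have hs := sq_pos hy
  rw [rr, Real.sqrt_eq_rpow, ← Real.rpow_mul hs.le]
  congr 1
  ring

lemma u1_eq (Φ μ A : ℝ) (y : ℝ × ℝ) (hy : y ≠ 0) :
    ((Φ / (2 * π * rr y)) • er y
        + (μ / rr y + A * rr y ^ (1 + Φ / (2 * π))) • et y).1
      = Lv (tL1 (Φ / (2 * π)) (Φ / (2 * π) / 2) μ A) y := by
  have hπ := Real.pi_pos
  have hR := rr_pos hy
  simp only [Prod.fst_add, Prod.smul_fst, smul_eq_mul, er, et, Lv, tL1, tmv, M',
    List.map_cons, List.map_nil, List.sum_cons, List.sum_nil]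
  rw [hRc hy, hRc hy, Real.rpow_add hR, Real.rpow_one,
    show (2 * (-1) : ℝ) = -2 by norm_num,
    show (2 * (Φ / (2 * π) / 2) : ℝ) = Φ / (2 * π) by ring,
    show rr y ^ ((-2) : ℝ) = (rr y ^ (2:ℕ))⁻¹ by
      rw [← Real.rpow_natCast (rr y) 2, ← Real.rpow_neg hR.le]; norm_num]
  field_simp
  ring

lemma u2_eq (Φ μ A : ℝ) (y : ℝ × ℝ) (hy : y ≠ 0) :
    ((Φ / (2 * π * rr y)) • er y
        + (μ / rr y + A * rr y ^ (1 + Φ / (2 * π))) • et y).2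
      = Lv (tL2 (Φ / (2 * π)) (Φ / (2 * π) / 2) μ A) y := by
  have hπ := Real.pi_pos
  have hR := rr_pos hy
  simp only [Prod.snd_add, Prod.smul_snd, smul_eq_mul, er, et, Lv, tL2, tmv, M',
    List.map_cons, List.map_nil, List.sum_cons, List.sum_nil]
  rw [hRc hy, hRc hy, Real.rpow_add hR, Real.rpow_one,
    show (2 * (-1) : ℝ) = -2 by norm_num,
    show (2 * (Φ / (2 * π) / 2) : ℝ) = Φ / (2 * π) by ring,
    show rr y ^ ((-2) : ℝ) = (rr y ^ (2:ℕ))⁻¹ by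
      rw [← Real.rpow_natCast (rr y) 2, ← Real.rpow_neg hR.le]; norm_num]
  field_simp
  ring

lemma p_eq (β μ A : ℝ) (y : ℝ × ℝ) (hy : y ≠ 0) :
    qv β μ A (rr y) = Lv (tLP β (β / 2) μ A) y := by
  simp only [qv, Lv, tLP, tmv, M', List.map_cons, List.map_nil, List.sum_cons, List.sum_nil]
  rw [hRc hy, hRc hy, hRc hy]
  ring

set_option maxHeartbeats 4000000 in
theorem stmt1 (Φ μ A : ℝ) (hΦ : Φ < -2 * π) :
    ∃ q : ℝ → ℝ, ∀ x : ℝ × ℝ, x ≠ 0 →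
      NSat (fun y => (Φ / (2 * π * rr y)) • er y
            + (μ / rr y + A * rr y ^ (1 + Φ / (2 * π))) • et y)
        (fun y => q (rr y)) x := by
  have hπ := Real.pi_pos
  set β : ℝ := Φ / (2 * π) with hβd
  have hβ : β < -1 := by
    rw [hβd, div_lt_iff₀ (by positivity)]
    linarith
  have hβ0 : β ≠ 0 := by linarith
  have hβ2 : (2 * β + 2) ≠ 0 := by intro h; nlinarith
  have hu1 := u1_eq Φ μ A
  have hu2 := u2_eq Φ μ A
  rw [← hβd] at hu1 hu2
  refine ⟨qv β μ A, fun x hx => ?_⟩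
  have hS : (0:ℝ) < x.1 ^ 2 + x.2 ^ 2 := sq_pos hx
  have hp := p_eq β μ A
  have hsub : ∀ e : ℝ, (x.1 ^ 2 + x.2 ^ 2) ^ (e - 1)
      = (x.1 ^ 2 + x.2 ^ 2) ^ e / (x.1 ^ 2 + x.2 ^ 2) := fun e => by
    rw [Real.rpow_sub hS, Real.rpow_one]
  have hm1 : (x.1 ^ 2 + x.2 ^ 2) ^ (-1 : ℝ) = 1 / (x.1 ^ 2 + x.2 ^ 2) := by
    rw [Real.rpow_neg hS.le, Real.rpow_one, one_div]
  have h2g : (x.1 ^ 2 + x.2 ^ 2) ^ (2 * (β / 2) + 1 : ℝ)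
      = ((x.1 ^ 2 + x.2 ^ 2) ^ (β / 2 : ℝ)) ^ (2:ℕ) * (x.1 ^ 2 + x.2 ^ 2) := by
    rw [show (2 * (β / 2) + 1 : ℝ) = (β / 2) + ((β / 2) + 1) by ring, Real.rpow_add hS,
      Real.rpow_add hS, Real.rpow_one]
    ring
  have hc1 : 2 * (2 * μ * A / β) * (β / 2) = 2 * μ * A := by field_simp
  have hc2 : 2 * (A ^ 2 / (2 * β + 2)) * (2 * (β / 2) + 1) = A ^ 2 := by
    have h1β : 1 + β ≠ 0 := (by linarith : 1 + β < 0).ne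
    rw [show 2 * (β / 2) + 1 = 1 + β by ring, show 2 * β + 2 = 2 * (1 + β) by ring]
    field_simp
  simp only [NSat]
  refine ⟨?_, ?_, ?_⟩
  · rw [lap_congr hx hu1, lap_Lv _ x hx,
      pd1_congr ((eventually_ne hx).mono fun y hy => hp y hy), pd1_Lv _ x hx,
      hu1 x hx, hu2 x hx,
      pd1_congr ((eventually_ne hx).mono fun y hy => hu1 y hy), pd1_Lv _ x hx,
      pd2_congr ((eventually_ne hx).mono fun y hy => hu1 y hy), pd2_Lv _ x hx]
    simp only [Lv, tL1, tL2, tLP, d1l, d2l, tmv, M', List.flatMap_cons, List.flatMap_nil,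
      List.map_cons, List.map_nil, List.sum_cons, List.sum_nil, List.append_nil,
      List.cons_append, List.nil_append]
    simp only [hc1, hc2, hsub, hm1, h2g]
    field_simp
    ring
  · rw [lap_congr hx hu2, lap_Lv _ x hx,
      pd2_congr ((eventually_ne hx).mono fun y hy => hp y hy), pd2_Lv _ x hx,
      hu1 x hx, hu2 x hx,
      pd1_congr ((eventually_ne hx).mono fun y hy => hu2 y hy), pd1_Lv _ x hx,
      pd2_congr ((eventually_ne hx).mono fun y hy => hu2 y hy), pd2_Lv _ x hx]
    simp only [Lv, tL1, tL2, tLP, d1l, d2l, tmv, M', List.flatMap_cons, List.flatMap_nil,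
      List.map_cons, List.map_nil, List.sum_cons, List.sum_nil, List.append_nil,
      List.cons_append, List.nil_append]
    simp only [hc1, hc2, hsub, hm1, h2g]
    field_simp
    ring
  · rw [pd1_congr ((eventually_ne hx).mono fun y hy => hu1 y hy),
      pd2_congr ((eventually_ne hx).mono fun y hy => hu2 y hy),
      pd1_Lv _ x hx, pd2_Lv _ x hx]
    simp only [Lv, tL1, tL2, d1l, tmv, M', List.flatMap_cons, List.flatMap_nil,
      List.map_cons, List.map_nil, List.sum_cons, List.sum_nil, List.append_nil,
      List.cons_append, List.nil_append, d2l]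
    simp only [hc1, hc2, hsub, hm1, h2g]
    field_simp
    ring
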